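/- Let b = (b_ij) be a real 2×2 matrix with b12 ≤ 0, b21 ≤ 0 and Δ := (b22 − b11)² + 4·b12·b21 > 0, and set λ1 = (−b11 − b22 + √Δ)/2. Then there exists a constant θ > 0 such that for all t ≥ 0 and all x = (x1,x2), y = (y1,y2) ∈ ℝ₊², the row sums π'₁(0,t), π'₂(0,t) of exp(−t·b) satisfy |x1 − y1|·π'₁(0,t) + |x2 − y2|·π'₂(0,t) ≤ (1 + θ)·(|x1 − y1| + |x2 − y2|)·e^{λ1 t}. -/

import Mathlib

/-!
Since `Δ > 0`, the matrix `-b` has the two distinct real eigenvalues `λ₁ > λ₂ = λ₁ - √Δ`, and by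
Cayley–Hamilton `(-b - λ₁)(-b - λ₂) = 0`. Sylvester's formula then writes `exp (-t b)` as
`e^{λ₁ t} P - e^{λ₂ t} Q` with constant matrices `P, Q`, so for `t ≥ 0` every row sum of
`exp (-t b)` is at most a constant times `e^{λ₁ t}`.
-/

open Matrix Real

/-- `rowSum0 b t i` is the `i`-th row sum of the matrix exponential `exp(−t·b)`. -/
noncomputable def rowSum0 (b : Matrix (Fin 2) (Fin 2) ℝ) (t : ℝ) (i : Fin 2) : ℝ :=
  (NormedSpace.exp ((-t) • b) *ᵥ ![1, 1]) i

namespace NormedSpace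

variable {𝔸 : Type*} [NormedRing 𝔸] [NormedAlgebra ℝ 𝔸] [CompleteSpace 𝔸]

theorem exp_mul_eq_smul_of_mul_eq_smul {a p : 𝔸} {μ : ℝ} (h : a * p = μ • p) :
    exp a * p = Real.exp μ • p := by
  have hpow (n : ℕ) : a ^ n * p = μ ^ n • p := by
    induction n with
    | zero => simp
    | succ n ih => rw [pow_succ', mul_assoc, ih, mul_smul_comm, h, smul_smul, ← pow_succ]
  have hexp : HasSum (fun n : ℕ => ((n.factorial : ℝ)⁻¹ * μ ^ n) • p) (Real.exp μ • p) := by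
    rw [Real.exp_eq_exp_ℝ]
    exact (exp_series_hasSum_exp' (𝕂 := ℝ) μ).smul_const p
  refine ((exp_series_hasSum_exp' (𝕂 := ℝ) a).mul_right p).unique ?_
  simpa only [smul_mul_assoc, hpow, smul_smul] using hexp

theorem exp_smul_eq_of_sub_mul_sub_eq_zero {a : 𝔸} {μ₁ μ₂ : ℝ} (hμ : μ₁ ≠ μ₂)
    (h : (a - μ₁ • 1) * (a - μ₂ • 1) = 0) (t : ℝ) :
    exp (t • a) = (μ₁ - μ₂)⁻¹ •
      (Real.exp (t * μ₁) • (a - μ₂ • 1) - Real.exp (t * μ₂) • (a - μ₁ • 1)) := by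
  have hcomm : Commute (a - μ₁ • 1) (a - μ₂ • 1) :=
    ((Commute.refl a).sub_right ((Commute.one_right a).smul_right μ₂)).sub_left
      (((Commute.one_left _).smul_left μ₁).sub_right ((Commute.one_right _).smul_right μ₂))
  have h₁ : t • a * (a - μ₂ • 1) = (t * μ₁) • (a - μ₂ • 1) := by
    have : a * (a - μ₂ • 1) = μ₁ • (a - μ₂ • 1) := by
      rw [← sub_eq_zero, ← h, sub_mul, smul_mul_assoc, one_mul]
    rw [smul_mul_assoc, this, smul_smul]
  have h₂ : t • a * (a - μ₁ • 1) = (t * μ₂) • (a - μ₁ • 1) := by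
    have : a * (a - μ₁ • 1) = μ₂ • (a - μ₁ • 1) := by
      rw [← sub_eq_zero, ← h, hcomm.eq, sub_mul, smul_mul_assoc, one_mul]
    rw [smul_mul_assoc, this, smul_smul]
  have hone : (1 : 𝔸) = (μ₁ - μ₂)⁻¹ • ((a - μ₂ • 1) - (a - μ₁ • 1)) := by
    rw [sub_sub_sub_cancel_left, ← sub_smul, smul_smul, inv_mul_cancel₀ (sub_ne_zero.2 hμ),
      one_smul]
  calc exp (t • a) = exp (t • a) * ((μ₁ - μ₂)⁻¹ • ((a - μ₂ • 1) - (a - μ₁ • 1))) := by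
        rw [← hone, mul_one]
    _ = _ := by
      rw [mul_smul_comm, mul_sub, exp_mul_eq_smul_of_mul_eq_smul h₁,
        exp_mul_eq_smul_of_mul_eq_smul h₂]

end NormedSpace

namespace Matrix

theorem fin_two_sub_smul_one_mul_sub_smul_one {R : Type*} [CommRing R]
    (A : Matrix (Fin 2) (Fin 2) R) {μ₁ μ₂ : R}
    (hadd : μ₁ + μ₂ = A.trace) (hmul : μ₁ * μ₂ = A.det) :
    (A - μ₁ • 1) * (A - μ₂ • 1) = 0 := by
  rw [trace_fin_two] at hadd
  rw [det_fin_two] at hmul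
  ext i j
  fin_cases i <;> fin_cases j <;> simp [mul_apply, Fin.sum_univ_two, one_apply]
  · linear_combination -A 0 0 * hadd + hmul
  · linear_combination -A 0 1 * hadd
  · linear_combination -A 1 0 * hadd
  · linear_combination -A 1 1 * hadd + hmul

variable {n : Type*} [Fintype n] [DecidableEq n]

nonrec theorem exp_smul_eq_of_sub_mul_sub_eq_zero {A : Matrix n n ℝ} {μ₁ μ₂ : ℝ}
    (hμ : μ₁ ≠ μ₂) (h : (A - μ₁ • 1) * (A - μ₂ • 1) = 0) (t : ℝ) :
    NormedSpace.exp (t • A) = (μ₁ - μ₂)⁻¹ •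
      (Real.exp (t * μ₁) • (A - μ₂ • 1) - Real.exp (t * μ₂) • (A - μ₁ • 1)) :=
  open scoped Norms.Operator in NormedSpace.exp_smul_eq_of_sub_mul_sub_eq_zero hμ h t

theorem exists_exp_smul_mulVec_le_of_sub_mul_sub_eq_zero {A : Matrix n n ℝ} {μ₁ μ₂ : ℝ}
    (hμ : μ₂ < μ₁) (h : (A - μ₁ • 1) * (A - μ₂ • 1) = 0) (v : n → ℝ) :
    ∃ C, ∀ t, 0 ≤ t → ∀ i, (NormedSpace.exp (t • A) *ᵥ v) i ≤ C * Real.exp (μ₁ * t) := by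
  refine ⟨(μ₁ - μ₂)⁻¹ * (‖(A - μ₂ • 1) *ᵥ v‖ + ‖(A - μ₁ • 1) *ᵥ v‖), fun t ht i => ?_⟩
  set p := (A - μ₂ • 1) *ᵥ v
  set q := (A - μ₁ • 1) *ᵥ v
  have hexp : Real.exp (t * μ₂) ≤ Real.exp (t * μ₁) := by gcongr
  have hp : p i ≤ ‖p‖ := (le_abs_self _).trans (norm_le_pi_norm p i)
  have hq : -q i ≤ ‖q‖ := (neg_le_abs _).trans (norm_le_pi_norm q i)
  have key : Real.exp (t * μ₁) * p i - Real.exp (t * μ₂) * q i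
      ≤ (‖p‖ + ‖q‖) * Real.exp (μ₁ * t) := by
    rw [mul_comm μ₁]
    nlinarith [Real.exp_pos (t * μ₂), norm_nonneg q]
  rw [exp_smul_eq_of_sub_mul_sub_eq_zero hμ.ne' h t, smul_mulVec, sub_mulVec, smul_mulVec,
    smul_mulVec, mul_assoc]
  exact mul_le_mul_of_nonneg_left key (inv_nonneg.2 (sub_nonneg.2 hμ.le))

end Matrix

theorem stmt7_general (b : Matrix (Fin 2) (Fin 2) ℝ)
    (Δ : ℝ) (hΔdef : Δ = (b 1 1 - b 0 0) ^ 2 + 4 * b 0 1 * b 1 0) (hΔ : 0 < Δ)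
    (lam1 : ℝ) (hlam1 : lam1 = (-(b 0 0) - b 1 1 + Real.sqrt Δ) / 2) :
    ∃ θ : ℝ, 0 < θ ∧
      ∀ t : ℝ, 0 ≤ t → ∀ x y : ℝ × ℝ,
        0 ≤ x.1 → 0 ≤ x.2 → 0 ≤ y.1 → 0 ≤ y.2 →
        |x.1 - y.1| * rowSum0 b t 0 + |x.2 - y.2| * rowSum0 b t 1
          ≤ (1 + θ) * (|x.1 - y.1| + |x.2 - y.2|) * Real.exp (lam1 * t) := by
  have hsqrt : Real.sqrt Δ ^ 2 = Δ := Real.sq_sqrt hΔ.le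
  set lam2 := (-(b 0 0) - b 1 1 - Real.sqrt Δ) / 2 with hlam2
  have hlam : lam2 < lam1 := by rw [hlam1, hlam2]; linarith [Real.sqrt_pos.2 hΔ]
  have hfac : (-b - lam1 • 1) * (-b - lam2 • 1) = 0 :=
    (-b).fin_two_sub_smul_one_mul_sub_smul_one
      (by rw [trace_fin_two, hlam1, hlam2]; simp only [Matrix.neg_apply]; ring)
      (by rw [det_fin_two, hlam1, hlam2]; simp only [Matrix.neg_apply]
          linear_combination -(hsqrt + hΔdef) / 4)
  obtain ⟨C, hC⟩ := exists_exp_smul_mulVec_le_of_sub_mul_sub_eq_zero hlam hfac ![1, 1]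
  refine ⟨|C| + 1, by positivity, fun t ht x y _ _ _ _ => ?_⟩
  have hrow (i : Fin 2) : rowSum0 b t i ≤ (1 + (|C| + 1)) * Real.exp (lam1 * t) := by
    have := hC t ht i
    rw [smul_neg, ← neg_smul] at this
    calc rowSum0 b t i ≤ C * Real.exp (lam1 * t) := this
      _ ≤ _ := by gcongr; linarith [le_abs_self C]
  nlinarith [hrow 0, hrow 1, abs_nonneg (x.1 - y.1), abs_nonneg (x.2 - y.2)]

/-- If `b12 ≤ 0`, `b21 ≤ 0` and `Δ = (b22 − b11)² + 4 b12 b21 > 0`, then there is a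
constant `θ > 0` such that for all `t ≥ 0` and all `x, y` in the closed first quadrant,
`|x1 − y1| π'₁(0,t) + |x2 − y2| π'₂(0,t) ≤ (1 + θ)(|x1 − y1| + |x2 − y2|) e^{λ1 t}`,
where `λ1 = (−b11 − b22 + √Δ)/2`. -/
theorem stmt7 (b : Matrix (Fin 2) (Fin 2) ℝ)
    (hb12 : b 0 1 ≤ 0) (hb21 : b 1 0 ≤ 0)
    (Δ : ℝ) (hΔdef : Δ = (b 1 1 - b 0 0) ^ 2 + 4 * b 0 1 * b 1 0) (hΔ : 0 < Δ)
    (lam1 : ℝ) (hlam1 : lam1 = (-(b 0 0) - b 1 1 + Real.sqrt Δ) / 2) :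
    ∃ θ : ℝ, 0 < θ ∧
      ∀ t : ℝ, 0 ≤ t → ∀ x y : ℝ × ℝ,
        0 ≤ x.1 → 0 ≤ x.2 → 0 ≤ y.1 → 0 ≤ y.2 →
        |x.1 - y.1| * rowSum0 b t 0 + |x.2 - y.2| * rowSum0 b t 1
          ≤ (1 + θ) * (|x.1 - y.1| + |x.2 - y.2|) * Real.exp (lam1 * t) :=
  stmt7_general b Δ hΔdef hΔ lam1 hlam1
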